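/- arXiv:0704.4003 — 2 statements merged into one kernel-verified Lean document; each statement's English description precedes it below -/
import Mathlib

section
/- Let w = (C^{w≤0}, C^{w≥0}) be a weight structure on a triangulated category C, and set C^- = ∪_{i∈ℤ} C^{w≤i}, C^+ = ∪_{i∈ℤ} C^{w≥i}, C^b = C^+ ∩ C^-. Then: (1) C^-, C^+ and C^b are classes of objects of Karoubi-closed full triangulated subcategories of C (they are closed under shifts, cones of morphisms between their objects, finite direct sums, and retracts); (2) w restricts to a weight structure on each of these subcategories (i.e. intersecting C^{w≤0} and C^{w≥0} with the given class yields a weight structure on the corresponding subcategory), whose heart equals C^{w=0}; (3) the restriction of w to C^b is non-degenerate: an object of C^b lying in C^{w≥l} for all l ∈ ℤ is zero, and an object of C^b lying in C^{w≤l} for all l ∈ ℤ is zero. -/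
open CategoryTheory CategoryTheory.Limits CategoryTheory.Pretriangulated ZeroObject

universe v u

variable (C : Type u) [Category.{v} C] [HasZeroObject C] [HasShift C ℤ] [Preadditive C]
  [∀ n : ℤ, (shiftFunctor C n).Additive] [Pretriangulated C]

/-- `X` is a retract of `Y` in `C`: the identity of `X` factors through `Y`. -/
def IsRetractOf (X Y : C) : Prop :=
  ∃ (i : X ⟶ Y) (r : Y ⟶ X), i ≫ r = 𝟙 X

/-- A weight structure on the triangulated category `C` (Bondarko).
`LE` is the class `C^{w≤0}`, `GE` is the class `C^{w≥0}`. -/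
structure WeightStructure where
  /-- the class `C^{w≤0}` -/
  LE : Set C
  /-- the class `C^{w≥0}` -/
  GE : Set C
  zero_mem_LE : (0 : C) ∈ LE
  zero_mem_GE : (0 : C) ∈ GE
  sum_mem_LE : ∀ X Y : C, X ∈ LE → Y ∈ LE → (X ⊞ Y) ∈ LE
  sum_mem_GE : ∀ X Y : C, X ∈ GE → Y ∈ GE → (X ⊞ Y) ∈ GE
  retract_mem_LE : ∀ X Y : C, IsRetractOf C X Y → Y ∈ LE → X ∈ LE
  retract_mem_GE : ∀ X Y : C, IsRetractOf C X Y → Y ∈ GE → X ∈ GE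
  shift_mem_LE : ∀ X : C, X ∈ LE → X⟦(1 : ℤ)⟧ ∈ LE
  shift_mem_GE : ∀ X : C, X ∈ GE → X⟦(-1 : ℤ)⟧ ∈ GE
  orthogonal : ∀ X Y : C, X ∈ GE → Y ∈ LE → ∀ f : X ⟶ Y⟦(1 : ℤ)⟧, f = 0
  exists_weight_decomposition : ∀ X : C, ∃ (A B : C) (g : X ⟶ A) (f : A ⟶ B)
    (h : B ⟶ X⟦(1 : ℤ)⟧), A ∈ LE ∧ B ∈ GE ∧ Triangle.mk g f h ∈ distTriang C


/-- The class of objects of a Karoubi-closed full triangulated subcategory: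
closed under all shifts, cones, contains `0`, closed under finite direct sums
and under retracts. -/
def IsKaroubiClosedTriangulatedClass (S : Set C) : Prop :=
  (∀ (X : C) (n : ℤ), X ∈ S → X⟦n⟧ ∈ S) ∧
  (∀ T : Triangle C, (T ∈ distTriang C) → T.obj₁ ∈ S → T.obj₂ ∈ S → T.obj₃ ∈ S) ∧
  ((0 : C) ∈ S) ∧
  (∀ X Y : C, X ∈ S → Y ∈ S → (X ⊞ Y) ∈ S) ∧
  (∀ X Y : C, IsRetractOf C X Y → Y ∈ S → X ∈ S)

/-- `C^- = ∪ C^{w≤i}`. -/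
def WeightStructure.minus (w : WeightStructure C) : Set C :=
  {X : C | ∃ i : ℤ, X⟦i⟧ ∈ w.LE}

/-- `C^+ = ∪ C^{w≥i}`. -/
def WeightStructure.plus (w : WeightStructure C) : Set C :=
  {X : C | ∃ i : ℤ, X⟦i⟧ ∈ w.GE}

section Aux

variable {C}

lemma isRetractOf_of_iso {X Y : C} (e : X ≅ Y) : IsRetractOf C X Y :=
  ⟨e.hom, e.inv, e.hom_inv_id⟩

lemma isRetractOf_shift {X Y : C} (h : IsRetractOf C X Y) (n : ℤ) :
    IsRetractOf C (X⟦n⟧) (Y⟦n⟧) := by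
  obtain ⟨i, r, hir⟩ := h
  exact ⟨i⟦n⟧', r⟦n⟧', by rw [← Functor.map_comp, hir]; simp⟩

/-- A distinguished triangle whose connecting map vanishes splits: the two
extreme objects are retracts of the middle one. -/
lemma splitTriangle {T : Triangle C} (hT : T ∈ distTriang C) (h0 : T.mor₃ = 0) :
    IsRetractOf C T.obj₁ T.obj₂ ∧ IsRetractOf C T.obj₃ T.obj₂ := by
  obtain ⟨s, hs⟩ := Triangle.coyoneda_exact₃ T hT (𝟙 T.obj₃) (by rw [h0, comp_zero])
  have hψ : IsIso (biprod.desc T.mor₁ s) := by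
    exact isIso₂_of_isIso₁₃
      (T := binaryBiproductTriangle T.obj₁ T.obj₃) (T' := T)
      { hom₁ := 𝟙 T.obj₁
        hom₂ := biprod.desc T.mor₁ s
        hom₃ := 𝟙 T.obj₃
        comm₁ := (biprod.inl_desc _ _).trans (Category.id_comp _).symm
        comm₂ := by
          change biprod.snd ≫ 𝟙 T.obj₃ = biprod.desc T.mor₁ s ≫ T.mor₂
          ext
          · simp [comp_distTriang_mor_zero₁₂ T hT]
          · simp [← hs]
        comm₃ := by rw [h0]; exact zero_comp.trans comp_zero.symm }
      (binaryBiproductTriangle_distinguished _ _) hT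
      (by dsimp; exact IsIso.id _) (by dsimp; exact IsIso.id _)
  constructor
  · exact ⟨biprod.inl ≫ biprod.desc T.mor₁ s, inv (biprod.desc T.mor₁ s) ≫ biprod.fst,
      by rw [Category.assoc, IsIso.hom_inv_id_assoc, biprod.inl_fst]⟩
  · exact ⟨biprod.inr ≫ biprod.desc T.mor₁ s, inv (biprod.desc T.mor₁ s) ≫ biprod.snd,
      by rw [Category.assoc, IsIso.hom_inv_id_assoc, biprod.inr_snd]⟩

namespace WeightStructure

variable (w : WeightStructure C)

lemma mem_LE_of_iso {X Y : C} (e : X ≅ Y) (h : Y ∈ w.LE) : X ∈ w.LE :=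
  w.retract_mem_LE X Y (isRetractOf_of_iso e) h

lemma mem_GE_of_iso {X Y : C} (e : X ≅ Y) (h : Y ∈ w.GE) : X ∈ w.GE :=
  w.retract_mem_GE X Y (isRetractOf_of_iso e) h

lemma shift_nat_mem_LE {X : C} (h : X ∈ w.LE) (n : ℕ) : X⟦(n : ℤ)⟧ ∈ w.LE := by
  induction n with
  | zero => exact w.mem_LE_of_iso ((shiftFunctorZero C ℤ).app X) h
  | succ n ih =>
      exact w.mem_LE_of_iso
        ((shiftFunctorAdd' C (n : ℤ) 1 (((n + 1 : ℕ) : ℤ)) (by push_cast; ring)).app X)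
        (w.shift_mem_LE _ ih)

lemma shift_nat_mem_GE {X : C} (h : X ∈ w.GE) (n : ℕ) : X⟦(-(n : ℤ))⟧ ∈ w.GE := by
  induction n with
  | zero =>
      have h0 : (-((0 : ℕ) : ℤ)) = 0 := by norm_num
      rw [h0]
      exact w.mem_GE_of_iso ((shiftFunctorZero C ℤ).app X) h
  | succ n ih =>
      exact w.mem_GE_of_iso
        ((shiftFunctorAdd' C (-(n : ℤ)) (-1) (-((n + 1 : ℕ) : ℤ)) (by push_cast; ring)).app X)
        (w.shift_mem_GE _ ih)

lemma mem_LE_mono {X : C} {a b : ℤ} (hab : a ≤ b) (h : X⟦a⟧ ∈ w.LE) : X⟦b⟧ ∈ w.LE := by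
  obtain ⟨n, rfl⟩ : ∃ n : ℕ, b = a + (n : ℤ) := ⟨(b - a).toNat, by omega⟩
  exact w.mem_LE_of_iso ((shiftFunctorAdd' C a (n : ℤ) _ rfl).app X) (w.shift_nat_mem_LE h n)

lemma mem_GE_anti {X : C} {a b : ℤ} (hab : b ≤ a) (h : X⟦a⟧ ∈ w.GE) : X⟦b⟧ ∈ w.GE := by
  obtain ⟨n, rfl⟩ : ∃ n : ℕ, b = a + (-(n : ℤ)) := ⟨(a - b).toNat, by omega⟩
  exact w.mem_GE_of_iso ((shiftFunctorAdd' C a (-(n : ℤ)) _ rfl).app X)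
    (w.shift_nat_mem_GE h n)

/-- Orthogonality, in the form `Hom(X⟦-1⟧, Y) = 0` for `X ∈ GE`, `Y ∈ LE`. -/
lemma orthogonal_neg_shift {X Y : C} (hX : X ∈ w.GE) (hY : Y ∈ w.LE)
    (f : X⟦(-1 : ℤ)⟧ ⟶ Y) : f = 0 := by
  set e := (shiftFunctorCompIsoId C (-1 : ℤ) (1 : ℤ) (by norm_num)).app X
  have h1 : f⟦(1 : ℤ)⟧' = 0 := by
    have h2 := w.orthogonal X Y hX hY (e.inv ≫ f⟦(1 : ℤ)⟧')
    calc f⟦(1 : ℤ)⟧' = e.hom ≫ (e.inv ≫ f⟦(1 : ℤ)⟧') := by simp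
    _ = 0 := by rw [h2, comp_zero]
  apply (shiftFunctor C (1 : ℤ)).map_injective
  rw [Functor.map_zero]
  exact h1

/-- `C^{w≤0}` is closed under extensions. -/
lemma LE_ext {T : Triangle C} (hT : T ∈ distTriang C) (h₁ : T.obj₁ ∈ w.LE)
    (h₃ : T.obj₃ ∈ w.LE) : T.obj₂ ∈ w.LE := by
  obtain ⟨A, B, g, f, h, hA, hB, hD⟩ := w.exists_weight_decomposition T.obj₂
  have hT' : (Triangle.shiftFunctor C (1 : ℤ)).obj T ∈ distTriang C :=
    Triangle.shift_distinguished T hT _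
  have h0 : h = 0 := by
    obtain ⟨k, hk⟩ := Triangle.coyoneda_exact₂ _ hT'
      (h : B ⟶ ((Triangle.shiftFunctor C (1 : ℤ)).obj T).obj₂)
      (w.orthogonal B T.obj₃ hB h₃ (h ≫ ((Triangle.shiftFunctor C (1 : ℤ)).obj T).mor₂))
    rw [w.orthogonal B T.obj₁ hB h₁ k] at hk
    exact hk.trans zero_comp
  have hr := (splitTriangle hD h0).1
  exact w.retract_mem_LE _ _ hr hA

/-- `C^{w≥0}` is closed under extensions. -/
lemma GE_ext {T : Triangle C} (hT : T ∈ distTriang C) (h₁ : T.obj₁ ∈ w.GE)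
    (h₃ : T.obj₃ ∈ w.GE) : T.obj₂ ∈ w.GE := by
  obtain ⟨A, B, g, f, h, hA, hB, hD⟩ := w.exists_weight_decomposition (T.obj₂⟦(-1 : ℤ)⟧)
  have hT' : (Triangle.shiftFunctor C (-1 : ℤ)).obj T ∈ distTriang C :=
    Triangle.shift_distinguished T hT _
  have h0 : g = 0 := by
    obtain ⟨k, hk⟩ := Triangle.yoneda_exact₂ _ hT'
      (g : ((Triangle.shiftFunctor C (-1 : ℤ)).obj T).obj₂ ⟶ A)
      (w.orthogonal_neg_shift h₁ hA (((Triangle.shiftFunctor C (-1 : ℤ)).obj T).mor₁ ≫ g))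
    rw [w.orthogonal_neg_shift h₃ hA k] at hk
    exact hk.trans comp_zero
  have hmor : (Triangle.mk g f h).rotate.mor₃ = 0 := by
    change -(g⟦(1 : ℤ)⟧') = 0
    rw [h0]
    simp
  have hr := (splitTriangle (rot_of_distTriang _ hD) hmor).2
  have hmem : (T.obj₂⟦(-1 : ℤ)⟧)⟦(1 : ℤ)⟧ ∈ w.GE := w.retract_mem_GE _ _ hr hB
  exact w.mem_GE_of_iso
    (((shiftFunctorCompIsoId C (-1 : ℤ) (1 : ℤ) (by norm_num)).app T.obj₂).symm) hmem

lemma minus_shift {X : C} (n : ℤ) (h : X ∈ w.minus C) : X⟦n⟧ ∈ w.minus C := by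
  obtain ⟨i, hi⟩ := h
  exact ⟨i - n, w.mem_LE_of_iso ((shiftFunctorAdd' C n (i - n) i (by ring)).app X).symm hi⟩

lemma plus_shift {X : C} (n : ℤ) (h : X ∈ w.plus C) : X⟦n⟧ ∈ w.plus C := by
  obtain ⟨i, hi⟩ := h
  exact ⟨i - n, w.mem_GE_of_iso ((shiftFunctorAdd' C n (i - n) i (by ring)).app X).symm hi⟩

lemma minus_ext₂ {T : Triangle C} (hT : T ∈ distTriang C) (h₁ : T.obj₁ ∈ w.minus C)
    (h₃ : T.obj₃ ∈ w.minus C) : T.obj₂ ∈ w.minus C := by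
  obtain ⟨a, ha⟩ := h₁
  obtain ⟨b, hb⟩ := h₃
  have hT' : (Triangle.shiftFunctor C (max a b)).obj T ∈ distTriang C :=
    Triangle.shift_distinguished T hT _
  exact ⟨max a b, w.LE_ext hT' (w.mem_LE_mono (le_max_left a b) ha)
    (w.mem_LE_mono (le_max_right a b) hb)⟩

lemma plus_ext₂ {T : Triangle C} (hT : T ∈ distTriang C) (h₁ : T.obj₁ ∈ w.plus C)
    (h₃ : T.obj₃ ∈ w.plus C) : T.obj₂ ∈ w.plus C := by
  obtain ⟨a, ha⟩ := h₁
  obtain ⟨b, hb⟩ := h₃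
  have hT' : (Triangle.shiftFunctor C (min a b)).obj T ∈ distTriang C :=
    Triangle.shift_distinguished T hT _
  exact ⟨min a b, w.GE_ext hT' (w.mem_GE_anti (min_le_left a b) ha)
    (w.mem_GE_anti (min_le_right a b) hb)⟩

lemma minus_cone {T : Triangle C} (hT : T ∈ distTriang C) (h₁ : T.obj₁ ∈ w.minus C)
    (h₂ : T.obj₂ ∈ w.minus C) : T.obj₃ ∈ w.minus C :=
  w.minus_ext₂ (rot_of_distTriang _ hT) h₂ (w.minus_shift 1 h₁)

lemma plus_cone {T : Triangle C} (hT : T ∈ distTriang C) (h₁ : T.obj₁ ∈ w.plus C)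
    (h₂ : T.obj₂ ∈ w.plus C) : T.obj₃ ∈ w.plus C :=
  w.plus_ext₂ (rot_of_distTriang _ hT) h₂ (w.plus_shift 1 h₁)

lemma LE_subset_minus {X : C} (h : X ∈ w.LE) : X ∈ w.minus C :=
  ⟨0, w.mem_LE_of_iso ((shiftFunctorZero C ℤ).app X) h⟩

lemma GE_subset_plus {X : C} (h : X ∈ w.GE) : X ∈ w.plus C :=
  ⟨0, w.mem_GE_of_iso ((shiftFunctorZero C ℤ).app X) h⟩

lemma karoubi_minus : IsKaroubiClosedTriangulatedClass C (w.minus C) := by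
  refine ⟨fun X n hX => w.minus_shift n hX,
    fun T hT h₁ h₂ => w.minus_cone hT h₁ h₂,
    w.LE_subset_minus w.zero_mem_LE,
    fun X Y hX hY => w.minus_ext₂ (binaryBiproductTriangle_distinguished X Y) hX hY,
    fun X Y hr hY => ?_⟩
  obtain ⟨i, hi⟩ := hY
  exact ⟨i, w.retract_mem_LE _ _ (isRetractOf_shift hr i) hi⟩

lemma karoubi_plus : IsKaroubiClosedTriangulatedClass C (w.plus C) := by
  refine ⟨fun X n hX => w.plus_shift n hX,
    fun T hT h₁ h₂ => w.plus_cone hT h₁ h₂,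
    w.GE_subset_plus w.zero_mem_GE,
    fun X Y hX hY => w.plus_ext₂ (binaryBiproductTriangle_distinguished X Y) hX hY,
    fun X Y hr hY => ?_⟩
  obtain ⟨i, hi⟩ := hY
  exact ⟨i, w.retract_mem_GE _ _ (isRetractOf_shift hr i) hi⟩

end WeightStructure

end Aux

/-- `C^-`, `C^+` and `C^b = C^+ ∩ C^-` are (classes of objects of)
Karoubi-closed triangulated subcategories of `C`; `w` restricts to a weight
structure on each of them (weight decompositions can be chosen inside the
subcategory, and the heart of the restriction is the whole heart `C^{w=0}`,
i.e. `C^{w=0}` is contained in each class); and the restriction of `w` to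
`C^b` is non-degenerate. -/
theorem weightStructure_minus_plus_bounded (w : WeightStructure C) :
    (IsKaroubiClosedTriangulatedClass C (w.minus C) ∧
     IsKaroubiClosedTriangulatedClass C (w.plus C) ∧
     IsKaroubiClosedTriangulatedClass C (w.plus C ∩ w.minus C)) ∧
    ((∀ S : Set C,
        (S = w.minus C ∨ S = w.plus C ∨ S = w.plus C ∩ w.minus C) →
        (∀ X ∈ S, ∃ (A B : C) (g : X ⟶ A) (f : A ⟶ B) (h : B ⟶ X⟦(1 : ℤ)⟧),
          A ∈ w.LE ∩ S ∧ B ∈ w.GE ∩ S ∧ Triangle.mk g f h ∈ distTriang C) ∧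
        w.LE ∩ w.GE ⊆ S)) ∧
    (∀ X : C, X ∈ w.plus C ∩ w.minus C →
      ((∀ l : ℤ, X⟦l⟧ ∈ w.GE) → IsZero X) ∧ ((∀ l : ℤ, X⟦l⟧ ∈ w.LE) → IsZero X)) := by
  have Km := w.karoubi_minus
  have Kp := w.karoubi_plus
  have Kb : IsKaroubiClosedTriangulatedClass C (w.plus C ∩ w.minus C) := by
    obtain ⟨ms, mc, mz, msum, mr⟩ := Km
    obtain ⟨ps, pc, pz, psum, pr⟩ := Kp
    exact ⟨fun X n hX => ⟨ps X n hX.1, ms X n hX.2⟩,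
      fun T hT h₁ h₂ => ⟨pc T hT h₁.1 h₂.1, mc T hT h₁.2 h₂.2⟩,
      ⟨pz, mz⟩,
      fun X Y hX hY => ⟨psum X Y hX.1 hY.1, msum X Y hX.2 hY.2⟩,
      fun X Y hr hY => ⟨pr X Y hr hY.1, mr X Y hr hY.2⟩⟩
  refine ⟨⟨Km, Kp, Kb⟩, ?_, ?_⟩
  · intro S hS
    have hdec : ∀ X : C, ∃ (A B : C) (g : X ⟶ A) (f : A ⟶ B) (h : B ⟶ X⟦(1 : ℤ)⟧),
        A ∈ w.LE ∧ B ∈ w.GE ∧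
        A ∈ w.minus C ∧ B ∈ w.plus C ∧
        (X ∈ w.minus C → B ∈ w.minus C) ∧ (X ∈ w.plus C → A ∈ w.plus C) ∧
        Triangle.mk g f h ∈ distTriang C := by
      intro X
      obtain ⟨A, B, g, f, h, hA, hB, hD⟩ := w.exists_weight_decomposition X
      have hAmin : A ∈ w.minus C := w.LE_subset_minus hA
      have hBplus : B ∈ w.plus C := w.GE_subset_plus hB
      exact ⟨A, B, g, f, h, hA, hB, hAmin, hBplus,
        fun hX => w.minus_cone hD hX hAmin,
        fun hX => w.plus_cone (inv_rot_of_distTriang _ hD) (w.plus_shift (-1) hBplus) hX,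
        hD⟩
    rcases hS with rfl | rfl | rfl
    · refine ⟨fun X hX => ?_, fun X hX => w.LE_subset_minus hX.1⟩
      obtain ⟨A, B, g, f, h, hA, hB, hAmin, hBplus, hBmin, hAplus, hD⟩ := hdec X
      exact ⟨A, B, g, f, h, ⟨hA, hAmin⟩, ⟨hB, hBmin hX⟩, hD⟩
    · refine ⟨fun X hX => ?_, fun X hX => w.GE_subset_plus hX.2⟩
      obtain ⟨A, B, g, f, h, hA, hB, hAmin, hBplus, hBmin, hAplus, hD⟩ := hdec X
      exact ⟨A, B, g, f, h, ⟨hA, hAplus hX⟩, ⟨hB, hBplus⟩, hD⟩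
    · refine ⟨fun X hX => ?_,
        fun X hX => ⟨w.GE_subset_plus hX.2, w.LE_subset_minus hX.1⟩⟩
      obtain ⟨A, B, g, f, h, hA, hB, hAmin, hBplus, hBmin, hAplus, hD⟩ := hdec X
      exact ⟨A, B, g, f, h, ⟨hA, hAplus hX.1, hAmin⟩, ⟨hB, hBplus, hBmin hX.2⟩, hD⟩
  · intro X hX
    constructor
    · intro hG
      obtain ⟨i, hi⟩ := hX.2
      set e := (shiftFunctorAdd' C (i + 1) (-1) i (by ring)).app X with he
      have hinv : e.inv = 0 := w.orthogonal_neg_shift (hG (i + 1)) hi e.inv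
      have hid : 𝟙 (X⟦i⟧) = 0 := by rw [← e.hom_inv_id, hinv, comp_zero]
      have hz : IsZero ((X⟦i⟧)⟦-i⟧) := by
        rw [IsZero.iff_id_eq_zero, ← CategoryTheory.Functor.map_id (shiftFunctor C (-i)), hid, Functor.map_zero]
      exact IsZero.of_iso hz (((shiftFunctorCompIsoId C i (-i) (by ring)).app X).symm)
    · intro hL
      obtain ⟨i, hi⟩ := hX.1
      set e := (shiftFunctorAdd' C (i - 1) 1 i (by ring)).app X with he
      have hhom : e.hom = 0 := w.orthogonal _ _ hi (hL (i - 1)) e.hom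
      have hid : 𝟙 (X⟦i⟧) = 0 := by rw [← e.hom_inv_id, hhom, zero_comp]
      have hz : IsZero ((X⟦i⟧)⟦-i⟧) := by
        rw [IsZero.iff_id_eq_zero, ← CategoryTheory.Functor.map_id (shiftFunctor C (-i)), hid, Functor.map_zero]
      exact IsZero.of_iso hz (((shiftFunctorCompIsoId C i (-i) (by ring)).app X).symm)
end

section
/- Let w be a weight structure on a triangulated category C, let X be an object of C, and let i > j be integers. Fix weight decompositions of X[i] and of X[j], with structure morphisms a^k : X[k] → X^{w≤k}, f^k : X^{w≤k} → X^{w≥k+1}, b^k : X^{w≥k+1} → X[k+1] for k = i, j. Then there exist unique morphisms s : X^{w≤i}[j-i] → X^{w≤j} and q : X^{w≥i+1}[j-i] → X^{w≥j+1} satisfying s ∘ (a^i[j-i]) = a^j and b^j ∘ q = b^i[j-i]. Moreover there exist an object X^{[i,j]} ∈ C^{w≥0} ∩ C^{w≤i-j-1} and distinguished triangles X^{w≤i}[j-i] → X^{w≤j} → X^{[i,j]} → X^{w≤i}[j-i+1] (with first map s) and X^{[i,j]}[-1] → X^{w≥i+1}[j-i] → X^{w≥j+1} → X^{[i,j]}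 (with middle map q). -/
open CategoryTheory CategoryTheory.Limits CategoryTheory.Pretriangulated ZeroObject
open CategoryTheory.Preadditive

universe v u

variable (C : Type u) [Category.{v} C] [HasZeroObject C] [HasShift C ℤ] [Preadditive C]
  [∀ n : ℤ, (shiftFunctor C n).Additive] [Pretriangulated C]

section Helpers

variable {C}
variable (w : WeightStructure C)

lemma WS.mem_LE_of_iso {X Y : C} (e : X ≅ Y) (h : Y ∈ w.LE) : X ∈ w.LE :=
  w.retract_mem_LE X Y ⟨e.hom, e.inv, e.hom_inv_id⟩ h

lemma WS.mem_GE_of_iso {X Y : C} (e : X ≅ Y) (h : Y ∈ w.GE) : X ∈ w.GE :=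
  w.retract_mem_GE X Y ⟨e.hom, e.inv, e.hom_inv_id⟩ h

lemma WS.le_mono (X : C) {a b : ℤ} (h : X⟦a⟧ ∈ w.LE) (hab : a ≤ b) : X⟦b⟧ ∈ w.LE := by
  obtain ⟨k, rfl⟩ : ∃ k : ℕ, b = a + k := ⟨(b - a).toNat, by omega⟩
  clear hab
  induction k with
  | zero => simpa using h
  | succ n ih =>
    exact WS.mem_LE_of_iso w ((shiftFunctorAdd' C (a+n) 1 (a+(n+1:ℕ)) (by push_cast; ring)).app X)
      (w.shift_mem_LE _ ih)

lemma WS.ge_anti (X : C) {a b : ℤ} (h : X⟦a⟧ ∈ w.GE) (hba : b ≤ a) : X⟦b⟧ ∈ w.GE := by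
  obtain ⟨k, rfl⟩ : ∃ k : ℕ, b = a - k := ⟨(a - b).toNat, by omega⟩
  clear hba
  induction k with
  | zero => simpa using h
  | succ n ih =>
    exact WS.mem_GE_of_iso w ((shiftFunctorAdd' C (a-n) (-1) (a-(n+1:ℕ)) (by push_cast; ring)).app X)
      (w.shift_mem_GE _ ih)

lemma WS.shift_shift_mem_LE (X : C) (a b c : ℤ) (h : a + b = c) (hX : X⟦c⟧ ∈ w.LE) :
    (X⟦a⟧)⟦b⟧ ∈ w.LE :=
  WS.mem_LE_of_iso w ((shiftFunctorAdd' C a b c h).app X).symm hX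

lemma WS.shift_shift_mem_GE (X : C) (a b c : ℤ) (h : a + b = c) (hX : X⟦c⟧ ∈ w.GE) :
    (X⟦a⟧)⟦b⟧ ∈ w.GE :=
  WS.mem_GE_of_iso w ((shiftFunctorAdd' C a b c h).app X).symm hX

lemma WS.hom_zero {A B : C} (m l : ℤ) (hA : A⟦m⟧ ∈ w.GE) (hB : B⟦l⟧ ∈ w.LE)
    (h : l < m) (f : A ⟶ B) : f = 0 := by
  have hB' : B⟦m - 1⟧ ∈ w.LE := WS.le_mono w B hB (by omega)
  have e : B⟦m⟧ ≅ (B⟦m-1⟧)⟦(1:ℤ)⟧ := (shiftFunctorAdd' C (m-1) 1 m (by ring)).app B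
  have hz : f⟦m⟧' ≫ e.hom = 0 := w.orthogonal _ _ hA hB' _
  have : f⟦m⟧' = 0 := by
    have := hz =≫ e.inv
    simpa using this
  exact (shiftFunctor C m).map_injective (by simpa using this)


lemma WS.le_char (E : C) (h : ∀ G ∈ w.GE, ∀ f : G ⟶ E⟦(1:ℤ)⟧, f = 0) : E ∈ w.LE := by
  obtain ⟨A, B, g, f, h₀, hA, hB, hT⟩ := w.exists_weight_decomposition E
  have h₀0 : h₀ = 0 := h B hB h₀
  have hT' := inv_rot_of_distTriang _ hT
  have hm : (Triangle.mk g f h₀).invRotate.mor₁ = 0 := by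
    dsimp [Triangle.invRotate]
    subst h₀0
    show -(shiftFunctor C (-1)).map (0 : B ⟶ E⟦(1:ℤ)⟧) ≫ _ = 0
    simp
    exact zero_comp
  obtain ⟨r, hr⟩ := Triangle.yoneda_exact₂ _ hT' (𝟙 E) (by rw [hm]; exact zero_comp)
  exact w.retract_mem_LE E A ⟨g, r, hr.symm⟩ hA

lemma WS.ge_char (E : C) (h : ∀ A ∈ w.LE, ∀ f : E ⟶ A⟦(1:ℤ)⟧, f = 0) : E ∈ w.GE := by
  obtain ⟨A, B, g, f, h₀, hA, hB, hT⟩ := w.exists_weight_decomposition (E⟦(-1:ℤ)⟧)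
  have hT' := rot_of_distTriang _ hT
  set T₁ := (Triangle.mk g f h₀).rotate with hT₁def
  -- T₁ = (A, B, E⟦-1⟧⟦1⟧; f, h₀, -g⟦1⟧)
  let ι : (E⟦(-1:ℤ)⟧)⟦(1:ℤ)⟧ ≅ E := (shiftFunctorCompIsoId C (-1 : ℤ) (1 : ℤ) (by ring)).app E
  have hm : T₁.mor₃ = 0 := by
    have : ι.inv ≫ T₁.mor₃ = 0 := h A hA _
    exact (ι.hom_inv_id_assoc T₁.mor₃).symm.trans (by rw [this]; exact comp_zero)
  obtain ⟨r, hr⟩ := Triangle.coyoneda_exact₃ _ hT' ι.inv (by rw [hm]; exact comp_zero)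
  refine w.retract_mem_GE E B ⟨r, T₁.mor₂ ≫ ι.hom, ?_⟩ hB
  have := congrArg (· ≫ ι.hom) hr
  simp at this
  exact (Category.assoc _ _ _).symm.trans this.symm

/-- extension-closedness of `LE` -/
lemma WS.ext_LE (T : Triangle C) (hT : T ∈ distTriang C)
    (h₁ : T.obj₁ ∈ w.LE) (h₃ : T.obj₃ ∈ w.LE) : T.obj₂ ∈ w.LE := by
  refine WS.le_char w _ (fun G hG f => ?_)
  have hT' : (Triangle.shiftFunctor C (1:ℤ)).obj T ∈ distTriang C :=
    Triangle.shift_distinguished T hT 1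
  have hf : f ≫ ((Triangle.shiftFunctor C (1:ℤ)).obj T).mor₂ = 0 := by
    show f ≫ ((1:ℤ).negOnePow • T.mor₂⟦(1:ℤ)⟧') = 0
    rw [Linear.comp_units_smul]
    have : f ≫ T.mor₂⟦(1:ℤ)⟧' = 0 := w.orthogonal _ _ hG h₃ _
    rw [this, smul_zero]
  obtain ⟨g, hg⟩ := Triangle.coyoneda_exact₂ _ hT' f hf
  have hg0 : g = 0 := w.orthogonal _ _ hG h₁ g
  rw [hg, hg0]; exact zero_comp

/-- extension-closedness of `GE` -/
lemma WS.ext_GE (T : Triangle C) (hT : T ∈ distTriang C)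
    (h₁ : T.obj₁ ∈ w.GE) (h₃ : T.obj₃ ∈ w.GE) : T.obj₂ ∈ w.GE := by
  refine WS.ge_char w _ (fun A hA f => ?_)
  obtain ⟨g, hg⟩ := Triangle.yoneda_exact₂ _ hT f (w.orthogonal _ _ h₁ hA _)
  rw [hg, w.orthogonal _ _ h₃ hA g, comp_zero]

lemma WS.ext_LE_shift (T : Triangle C) (hT : T ∈ distTriang C) (n : ℤ)
    (h₁ : T.obj₁⟦n⟧ ∈ w.LE) (h₃ : T.obj₃⟦n⟧ ∈ w.LE) : T.obj₂⟦n⟧ ∈ w.LE :=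
  WS.ext_LE w _ (Triangle.shift_distinguished T hT n) h₁ h₃

lemma WS.ext_GE_shift (T : Triangle C) (hT : T ∈ distTriang C) (n : ℤ)
    (h₁ : T.obj₁⟦n⟧ ∈ w.GE) (h₃ : T.obj₃⟦n⟧ ∈ w.GE) : T.obj₂⟦n⟧ ∈ w.GE :=
  WS.ext_GE w _ (Triangle.shift_distinguished T hT n) h₁ h₃

end Helpers

/-- double weight decompositions, Proposition 1.5.6(1) of
Bondarko: given weight decompositions of `X[i]` and `X[j]` for `i > j`
(encoded after shifting as distinguished triangles `X → Pᵢ → Qᵢ → X⟦1⟧` with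
`Pᵢ ∈ C^{w≤i}`, `Qᵢ ∈ C^{w≥i+1}`, and similarly for `j`), there are unique
morphisms `s : Pᵢ ⟶ Pⱼ` and `q : Qᵢ ⟶ Qⱼ` compatible with the structure
morphisms, and there exist `M = X^{[i,j]}[-j] ∈ C^{w≥j} ∩ C^{w≤i-1}` and
distinguished triangles `Pᵢ → Pⱼ → M → Pᵢ⟦1⟧` and `Qᵢ → Qⱼ → M → Qᵢ⟦1⟧` whose
first maps are `s` and `q` respectively. -/
theorem weightStructure_double_decomposition (w : WeightStructure C)
    (i j : ℤ) (hij : j < i) (X Pi Qi Pj Qj : C)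
    (ai : X ⟶ Pi) (fi : Pi ⟶ Qi) (bi : Qi ⟶ X⟦(1 : ℤ)⟧)
    (aj : X ⟶ Pj) (fj : Pj ⟶ Qj) (bj : Qj ⟶ X⟦(1 : ℤ)⟧)
    (hPi : Pi⟦i⟧ ∈ w.LE) (hQi : Qi⟦i + 1⟧ ∈ w.GE)
    (hPj : Pj⟦j⟧ ∈ w.LE) (hQj : Qj⟦j + 1⟧ ∈ w.GE)
    (hTi : Triangle.mk ai fi bi ∈ distTriang C)
    (hTj : Triangle.mk aj fj bj ∈ distTriang C) :
    (∃! s : Pi ⟶ Pj, ai ≫ s = aj) ∧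
    (∃! q : Qi ⟶ Qj, q ≫ bj = bi) ∧
    (∀ (s : Pi ⟶ Pj) (q : Qi ⟶ Qj), ai ≫ s = aj → q ≫ bj = bi →
      ∃ (M : C) (c : Pj ⟶ M) (d : M ⟶ Pi⟦(1 : ℤ)⟧)
        (y : Qj ⟶ M) (x : M ⟶ Qi⟦(1 : ℤ)⟧),
        M⟦j⟧ ∈ w.GE ∧ M⟦i - 1⟧ ∈ w.LE ∧
        (Triangle.mk s c d ∈ distTriang C) ∧
        (Triangle.mk q y x ∈ distTriang C)) := by
  -- basic Hom-vanishing facts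
  have hQiPj : ∀ f : Qi ⟶ Pj, f = 0 := fun f =>
    WS.hom_zero w (i+1) j hQi hPj (by omega) f
  have hQiPj1 : ∀ f : Qi ⟶ Pj⟦(1:ℤ)⟧, f = 0 := fun f =>
    WS.hom_zero w (i+1) (j-1) hQi
      (WS.shift_shift_mem_LE w Pj 1 (j-1) j (by ring) hPj) (by omega) f
  have hQi1Pi1 : ∀ f : Qi⟦(1:ℤ)⟧ ⟶ Pi⟦(1:ℤ)⟧, f = 0 := fun f =>
    WS.hom_zero w i (i-1)
      (WS.shift_shift_mem_GE w Qi 1 i (1+i) (by ring) (WS.ge_anti w Qi hQi (by omega)))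
      (WS.shift_shift_mem_LE w Pi 1 (i-1) i (by ring) hPi) (by omega) f
  -- uniqueness helpers
  have huS : ∀ t : Pi ⟶ Pj, ai ≫ t = 0 → t = 0 := by
    intro t ht
    obtain ⟨g, hg⟩ := Triangle.yoneda_exact₂ _ hTi t ht
    rw [hg, hQiPj g]; exact comp_zero
  have huQ : ∀ t : Qi ⟶ Qj, t ≫ bj = 0 → t = 0 := by
    intro t ht
    obtain ⟨g, hg⟩ := Triangle.coyoneda_exact₂ _ (rot_of_distTriang _ hTj) t ht
    rw [hg, hQiPj g]; exact zero_comp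
  -- part 1
  have part1 : ∃! s : Pi ⟶ Pj, ai ≫ s = aj := by
    have hbiaj : bi ≫ aj⟦(1:ℤ)⟧' = 0 := hQiPj1 _
    obtain ⟨g, hg⟩ := Triangle.yoneda_exact₂ _
      (rot_of_distTriang _ (rot_of_distTriang _ hTi)) (aj⟦(1:ℤ)⟧') hbiaj
    dsimp [Triangle.rotate] at hg
    -- hg : aj⟦1⟧' = (-(ai⟦1⟧')) ≫ g
    let g₀ : Pi⟦(1:ℤ)⟧ ⟶ Pj⟦(1:ℤ)⟧ := g
    have hg₀ : aj⟦(1:ℤ)⟧' = (-(ai⟦(1:ℤ)⟧')) ≫ g₀ := hg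
    let s₀ : Pi ⟶ Pj := -((shiftFunctor C (1:ℤ)).preimage g₀)
    have hexists : ai ≫ s₀ = aj := by
      apply (shiftFunctor C (1:ℤ)).map_injective
      show (shiftFunctor C (1:ℤ)).map (ai ≫ (-((shiftFunctor C (1:ℤ)).preimage g₀))) = _
      rw [Functor.map_comp, Functor.map_neg, Functor.map_preimage, hg₀]
      simp
    refine ⟨s₀, hexists, ?_⟩
    intro t ht
    have h0 : ai ≫ (t - s₀) = 0 := by
      rw [comp_sub, ht, hexists, sub_self]
    have := huS _ h0
    rwa [sub_eq_zero] at this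
  -- part 2
  have part2 : ∃! q : Qi ⟶ Qj, q ≫ bj = bi := by
    have hbiaj : bi ≫ (-(aj⟦(1:ℤ)⟧')) = 0 := by
      rw [comp_neg, hQiPj1 (bi ≫ aj⟦(1:ℤ)⟧'), neg_zero]
    obtain ⟨q', hq'⟩ := Triangle.coyoneda_exact₂ _
      (rot_of_distTriang _ (rot_of_distTriang _ hTj)) bi hbiaj
    let q₀ : Qi ⟶ Qj := q'
    have hq₀ : bi = q₀ ≫ bj := hq'
    refine ⟨q₀, hq₀.symm, ?_⟩
    intro t ht
    have h0 : (t - q₀) ≫ bj = 0 := by rw [sub_comp, ht, ← hq₀, sub_self]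
    have := huQ _ h0
    rwa [sub_eq_zero] at this
  refine ⟨part1, part2, ?_⟩
  intro s q hs hq
  -- the compatibility fi ≫ q = s ≫ fj
  have hsfj : fi ≫ q = s ≫ fj := by
    obtain ⟨c₀', hc₀, hc₀'⟩ := complete_distinguished_triangle_morphism _ _ hTi hTj
      (𝟙 X) s (hs.trans (Category.id_comp aj).symm)
    let c₀ : Qi ⟶ Qj := c₀'
    have hc₀₁ : fi ≫ c₀ = s ≫ fj := hc₀
    have hc₀₂ : bi ≫ (𝟙 X)⟦(1:ℤ)⟧' = c₀ ≫ bj := hc₀'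
    have hc₀q : c₀ = q := by
      have h1 : (c₀ - q) ≫ bj = 0 := by
        rw [sub_comp, hq, ← hc₀₂]
        simp
      have := huQ _ h1
      rwa [sub_eq_zero] at this
    rw [← hc₀q]; exact hc₀₁
  -- cones
  obtain ⟨N, y, x, hTN⟩ := Pretriangulated.distinguished_cocone_triangle q
  obtain ⟨M, c, d, hTM⟩ := Pretriangulated.distinguished_cocone_triangle s
  -- weight bounds
  have hM : M⟦i-1⟧ ∈ w.LE := by
    refine WS.ext_LE_shift w (Triangle.mk s c d).rotate (rot_of_distTriang _ hTM) (i-1)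
      ?_ ?_
    · exact WS.le_mono w Pj hPj (by omega)
    · exact WS.shift_shift_mem_LE w Pi 1 (i-1) i (by ring) hPi
  have hN_GE : N⟦j⟧ ∈ w.GE := by
    refine WS.ext_GE_shift w (Triangle.mk q y x).rotate (rot_of_distTriang _ hTN) j ?_ ?_
    · exact WS.ge_anti w Qj hQj (by omega)
    · exact WS.shift_shift_mem_GE w Qi 1 j (1+j) rfl (WS.ge_anti w Qi hQi (by omega))
  have hQiM : ∀ f : Qi ⟶ M, f = 0 := fun f =>
    WS.hom_zero w (i+1) (i-1) hQi hM (by omega) f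
  -- the map v : Qj ⟶ M
  obtain ⟨v', hv₁, hv₂⟩ := complete_distinguished_triangle_morphism _ _ hTj hTM
    ai (𝟙 Pj) ((Category.comp_id aj).trans hs.symm)
  let v : Qj ⟶ M := v'
  have hfjv : fj ≫ v = c := by
    have : fj ≫ v = 𝟙 Pj ≫ c := hv₁
    simpa using this
  have hvd : bj ≫ ai⟦(1:ℤ)⟧' = v ≫ d := hv₂
  -- the map ψ : M ⟶ N
  obtain ⟨ψ', hψ₁', hψ₂'⟩ := complete_distinguished_triangle_morphism _ _ hTM hTN
    fi fj hsfj.symm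
  let ψ : M ⟶ N := ψ'
  have hψ₁ : c ≫ ψ = fj ≫ y := hψ₁'
  have hqv : q ≫ v = 0 := hQiM _
  have hqy : q ≫ y = 0 := comp_distTriang_mor_zero₁₂ _ hTN
  have hcd : c ≫ d = 0 := comp_distTriang_mor_zero₂₃ _ hTM
  have hfjbj : fj ≫ bj = 0 := comp_distTriang_mor_zero₂₃ _ hTj
  have hds : d ≫ s⟦(1:ℤ)⟧' = 0 := by
    have h1 := comp_distTriang_mor_zero₂₃ _ (rot_of_distTriang _ hTM)
    change d ≫ (-(s⟦(1:ℤ)⟧')) = 0 at h1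
    rw [comp_neg, neg_eq_zero] at h1
    exact h1
  have hds' : ∀ (Z : C) (u : Pj⟦(1:ℤ)⟧ ⟶ Z), d ≫ s⟦(1:ℤ)⟧' ≫ u = 0 := by
    intro Z u; rw [← Category.assoc, hds, zero_comp]
  have hxq : x ≫ q⟦(1:ℤ)⟧' = 0 := by
    have h1 := comp_distTriang_mor_zero₂₃ _ (rot_of_distTriang _ hTN)
    change x ≫ (-(q⟦(1:ℤ)⟧')) = 0 at h1
    rw [comp_neg, neg_eq_zero] at h1
    exact h1
  have hxq' : ∀ (Z : C) (u : Qj⟦(1:ℤ)⟧ ⟶ Z), x ≫ q⟦(1:ℤ)⟧' ≫ u = 0 := by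
    intro Z u; rw [← Category.assoc, hxq, zero_comp]
  -- correct ψ so that v ≫ ψ₁ = y
  have hfjε : fj ≫ (v ≫ ψ - y) = 0 := by
    rw [comp_sub, ← Category.assoc, hfjv, hψ₁, sub_self]
  obtain ⟨g₁', hg₁'⟩ := Triangle.yoneda_exact₂ _ (rot_of_distTriang _ hTj)
    (v ≫ ψ - y) hfjε
  let g₁ : X⟦(1:ℤ)⟧ ⟶ N := g₁'
  have hg₁ : v ≫ ψ - y = bj ≫ g₁ := hg₁'
  have hbig : bi ≫ g₁ = 0 := by
    have h1 : q ≫ (v ≫ ψ - y) = 0 := by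
      rw [comp_sub, ← Category.assoc, hqv, zero_comp, hqy, sub_self]
    rw [hg₁, ← Category.assoc, hq] at h1
    exact h1
  obtain ⟨g₂', hg₂'⟩ := Triangle.yoneda_exact₂ _
    (rot_of_distTriang _ (rot_of_distTriang _ hTi)) g₁ hbig
  let g₂ : Pi⟦(1:ℤ)⟧ ⟶ N := g₂'
  have hg₂ : g₁ = (-(ai⟦(1:ℤ)⟧')) ≫ g₂ := hg₂'
  set ψ₁ : M ⟶ N := ψ + d ≫ g₂ with hψ₁def
  have hcψ₁ : c ≫ ψ₁ = fj ≫ y := by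
    rw [hψ₁def, comp_add, hψ₁, ← Category.assoc, hcd, zero_comp, add_zero]
  have hvψ₁ : v ≫ ψ₁ = y := by
    have h1 : v ≫ ψ = y + bj ≫ ((-(ai⟦(1:ℤ)⟧')) ≫ g₂) := by
      have h2 : v ≫ ψ - y = bj ≫ ((-(ai⟦(1:ℤ)⟧')) ≫ g₂) := by
        rw [hg₁, hg₂]
      rw [← h2]; abel
    have h3 : v ≫ (d ≫ g₂) = bj ≫ (ai⟦(1:ℤ)⟧' ≫ g₂) := by
      rw [← Category.assoc, ← hvd, Category.assoc]
    rw [hψ₁def, comp_add, h1, h3, neg_comp, comp_neg]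
    abel
  -- the map φ : N ⟶ M
  obtain ⟨φ', hφ'⟩ := Triangle.yoneda_exact₂ _ hTN v hqv
  let φ : N ⟶ M := φ'
  have hφ : v = y ≫ φ := hφ'
  -- pinning lemmas
  have pinN : ∀ ρ : N ⟶ Pi⟦(1:ℤ)⟧, y ≫ ρ = 0 → ρ = 0 := by
    intro ρ h0
    obtain ⟨k', hk'⟩ := Triangle.yoneda_exact₂ _ (rot_of_distTriang _ hTN) ρ h0
    let k : Qi⟦(1:ℤ)⟧ ⟶ Pi⟦(1:ℤ)⟧ := k'
    have hk : ρ = x ≫ k := hk'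
    rw [hk, hQi1Pi1 k, comp_zero]
  have pinτ : ∀ τ : Pi⟦(1:ℤ)⟧ ⟶ Pi⟦(1:ℤ)⟧, bj ≫ (ai⟦(1:ℤ)⟧' ≫ τ) = 0 → d ≫ τ = 0 := by
    intro τ h0
    obtain ⟨κ', hκ'⟩ := Triangle.yoneda_exact₂ _
      (rot_of_distTriang _ (rot_of_distTriang _ hTj)) (ai⟦(1:ℤ)⟧' ≫ τ) h0
    let κ : Pj⟦(1:ℤ)⟧ ⟶ Pi⟦(1:ℤ)⟧ := κ'
    have hκ : ai⟦(1:ℤ)⟧' ≫ τ = (-(aj⟦(1:ℤ)⟧')) ≫ κ := hκ'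
    have hzero : (-(ai⟦(1:ℤ)⟧')) ≫ (τ + s⟦(1:ℤ)⟧' ≫ κ) = 0 := by
      have hais : ai⟦(1:ℤ)⟧' ≫ s⟦(1:ℤ)⟧' = aj⟦(1:ℤ)⟧' := by
        rw [← Functor.map_comp, hs]
      rw [neg_comp, comp_add, hκ, ← Category.assoc, hais]
      simp
    obtain ⟨μ', hμ'⟩ := Triangle.yoneda_exact₂ _
      (rot_of_distTriang _ (rot_of_distTriang _ (rot_of_distTriang _ hTi)))
      (τ + s⟦(1:ℤ)⟧' ≫ κ) hzero
    let μ : Qi⟦(1:ℤ)⟧ ⟶ Pi⟦(1:ℤ)⟧ := μ'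
    have hμ : τ + s⟦(1:ℤ)⟧' ≫ κ = (-(fi⟦(1:ℤ)⟧')) ≫ μ := hμ'
    rw [hQi1Pi1 μ, comp_zero] at hμ
    have hτ2 : τ = -(s⟦(1:ℤ)⟧' ≫ κ) := eq_neg_of_add_eq_zero_left hμ
    rw [hτ2, comp_neg, ← Category.assoc, hds, zero_comp, neg_zero]
  -- ψ₁ ≫ (φ ≫ d) = d
  have hyφd : y ≫ (φ ≫ d) = bj ≫ ai⟦(1:ℤ)⟧' := by
    rw [← Category.assoc, ← hφ, ← hvd]
  have hψ₁φd : ψ₁ ≫ (φ ≫ d) = d := by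
    have hcδ : c ≫ (ψ₁ ≫ (φ ≫ d) - d) = 0 := by
      have e1 : c ≫ (ψ₁ ≫ (φ ≫ d)) = 0 := by
        rw [← Category.assoc, hcψ₁, Category.assoc, hyφd, ← Category.assoc, hfjbj,
          zero_comp]
      rw [comp_sub, e1, hcd, sub_self]
    obtain ⟨τ', hτ'⟩ := Triangle.yoneda_exact₂ _ (rot_of_distTriang _ hTM)
      (ψ₁ ≫ (φ ≫ d) - d) hcδ
    let τ : Pi⟦(1:ℤ)⟧ ⟶ Pi⟦(1:ℤ)⟧ := τ'
    have hτ : ψ₁ ≫ (φ ≫ d) - d = d ≫ τ := hτ'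
    have hvδ : v ≫ (ψ₁ ≫ (φ ≫ d) - d) = 0 := by
      rw [comp_sub, ← Category.assoc, hvψ₁, hyφd, ← hvd, sub_self]
    have h2 : bj ≫ (ai⟦(1:ℤ)⟧' ≫ τ) = 0 := by
      rw [hτ, ← Category.assoc, ← hvd, Category.assoc] at hvδ
      exact hvδ
    have h3 := pinτ τ h2
    have h4 : ψ₁ ≫ (φ ≫ d) - d = 0 := by rw [hτ, h3]
    rwa [sub_eq_zero] at h4
  -- identification of x
  obtain ⟨ρ', hρ₁', hρ₂'⟩ := complete_distinguished_triangle_morphism _ _ hTN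
    (rot_of_distTriang _ (rot_of_distTriang _ hTi)) (𝟙 Qi) bj (hq.trans (Category.id_comp bi).symm)
  let ρ : N ⟶ Pi⟦(1:ℤ)⟧ := ρ'
  have hρ₁ : y ≫ ρ = bj ≫ (-(ai⟦(1:ℤ)⟧')) := hρ₁'
  have hρ₂ : x ≫ (𝟙 Qi)⟦(1:ℤ)⟧' = ρ ≫ (-(fi⟦(1:ℤ)⟧')) := hρ₂'
  have hφdρ : φ ≫ d = -ρ := by
    have h0 : y ≫ (φ ≫ d + ρ) = 0 := by
      rw [comp_add, hyφd, hρ₁, comp_neg, add_neg_cancel]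
    have h1 := pinN _ h0
    exact eq_neg_of_add_eq_zero_left h1
  have hx : x = (φ ≫ d) ≫ fi⟦(1:ℤ)⟧' := by
    have h1 : x ≫ (𝟙 Qi)⟦(1:ℤ)⟧' = x := by simp
    rw [← h1, hρ₂, hφdρ]
    simp
  -- E := ψ₁ ≫ φ is an automorphism of M
  have hce : c ≫ (ψ₁ ≫ φ) = c := by
    rw [← Category.assoc, hcψ₁, Category.assoc, ← hφ, hfjv]
  have hed : (ψ₁ ≫ φ) ≫ d = d := by rw [Category.assoc]; exact hψ₁φd
  obtain ⟨ξ', hξ'⟩ := Triangle.yoneda_exact₂ _ (rot_of_distTriang _ hTM) (ψ₁ ≫ φ - 𝟙 M)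
    (by show c ≫ (ψ₁ ≫ φ - 𝟙 M) = 0
        rw [comp_sub, hce, Category.comp_id, sub_self])
  let ξ : Pi⟦(1:ℤ)⟧ ⟶ M := ξ'
  have hξ : ψ₁ ≫ φ - 𝟙 M = d ≫ ξ := hξ'
  have hξd : d ≫ (ξ ≫ d) = 0 := by
    rw [← Category.assoc, ← hξ, sub_comp, hed, Category.id_comp, sub_self]
  obtain ⟨n₁', hn₁'⟩ := Triangle.yoneda_exact₂ _
    (rot_of_distTriang _ (rot_of_distTriang _ hTM)) (ξ ≫ d) hξd
  let n₁ : Pj⟦(1:ℤ)⟧ ⟶ Pi⟦(1:ℤ)⟧ := n₁'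
  have hn₁ : ξ ≫ d = (-(s⟦(1:ℤ)⟧')) ≫ n₁ := hn₁'
  have hζζ : (ψ₁ ≫ φ - 𝟙 M) ≫ (ψ₁ ≫ φ - 𝟙 M) = 0 := by
    rw [hξ]
    calc (d ≫ ξ) ≫ d ≫ ξ = d ≫ (ξ ≫ d) ≫ ξ := by simp only [Category.assoc]
    _ = 0 := by
      rw [hn₁]
      simp only [neg_comp, Category.assoc, comp_neg, hds', neg_zero]
  have hEE : (ψ₁ ≫ φ) ≫ (ψ₁ ≫ φ) = (ψ₁ ≫ φ) + (ψ₁ ≫ φ) - 𝟙 M := by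
    have h := hζζ
    simp only [sub_comp, comp_sub, Category.comp_id, Category.id_comp] at h
    rw [sub_sub, sub_eq_zero] at h
    rw [h]; abel
  have hEiso : IsIso (ψ₁ ≫ φ) := by
    refine ⟨𝟙 M + 𝟙 M - (ψ₁ ≫ φ), ?_, ?_⟩
    · rw [comp_sub, comp_add, Category.comp_id, hEE]; abel
    · rw [sub_comp, add_comp, Category.id_comp, hEE]; abel
  -- F := φ ≫ ψ₁ is an automorphism of N
  have hyF : y ≫ (φ ≫ ψ₁) = y := by rw [← Category.assoc, ← hφ, hvψ₁]
  have hFx : (φ ≫ ψ₁) ≫ x = x := by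
    rw [hx]
    calc (φ ≫ ψ₁) ≫ (φ ≫ d) ≫ fi⟦(1:ℤ)⟧'
        = φ ≫ (ψ₁ ≫ (φ ≫ d)) ≫ fi⟦(1:ℤ)⟧' := by simp only [Category.assoc]
    _ = (φ ≫ d) ≫ fi⟦(1:ℤ)⟧' := by rw [hψ₁φd, ← Category.assoc]
  obtain ⟨k₂', hk₂'⟩ := Triangle.yoneda_exact₂ _ (rot_of_distTriang _ hTN) (φ ≫ ψ₁ - 𝟙 N)
    (by show y ≫ (φ ≫ ψ₁ - 𝟙 N) = 0
        rw [comp_sub, hyF, Category.comp_id, sub_self])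
  let k₂ : Qi⟦(1:ℤ)⟧ ⟶ N := k₂'
  have hk₂ : φ ≫ ψ₁ - 𝟙 N = x ≫ k₂ := hk₂'
  have hkx : x ≫ (k₂ ≫ x) = 0 := by
    rw [← Category.assoc, ← hk₂, sub_comp, hFx, Category.id_comp, sub_self]
  obtain ⟨n₂', hn₂'⟩ := Triangle.yoneda_exact₂ _
    (rot_of_distTriang _ (rot_of_distTriang _ hTN)) (k₂ ≫ x) hkx
  let n₂ : Qj⟦(1:ℤ)⟧ ⟶ Qi⟦(1:ℤ)⟧ := n₂'
  have hn₂ : k₂ ≫ x = (-(q⟦(1:ℤ)⟧')) ≫ n₂ := hn₂'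
  have hζζ' : (φ ≫ ψ₁ - 𝟙 N) ≫ (φ ≫ ψ₁ - 𝟙 N) = 0 := by
    rw [hk₂]
    calc (x ≫ k₂) ≫ x ≫ k₂ = x ≫ (k₂ ≫ x) ≫ k₂ := by simp only [Category.assoc]
    _ = 0 := by
      rw [hn₂]
      simp only [neg_comp, Category.assoc, comp_neg, hxq', neg_zero]
  have hFF : (φ ≫ ψ₁) ≫ (φ ≫ ψ₁) = (φ ≫ ψ₁) + (φ ≫ ψ₁) - 𝟙 N := by
    have h := hζζ'
    simp only [sub_comp, comp_sub, Category.comp_id, Category.id_comp] at h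
    rw [sub_sub, sub_eq_zero] at h
    rw [h]; abel
  have hFiso : IsIso (φ ≫ ψ₁) := by
    refine ⟨𝟙 N + 𝟙 N - (φ ≫ ψ₁), ?_, ?_⟩
    · rw [comp_sub, comp_add, Category.comp_id, hFF]; abel
    · rw [sub_comp, add_comp, Category.id_comp, hFF]; abel
  -- ψ₁ is an isomorphism
  haveI := hEiso
  haveI := hFiso
  haveI hψ₁iso : IsIso ψ₁ := by
    have key : φ ≫ inv (ψ₁ ≫ φ) = inv (φ ≫ ψ₁) ≫ φ := by
      rw [← Category.id_comp (φ ≫ inv (ψ₁ ≫ φ)), ← IsIso.inv_hom_id (φ ≫ ψ₁),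
        Category.assoc]
      congr 1
      calc (φ ≫ ψ₁) ≫ φ ≫ inv (ψ₁ ≫ φ)
          = φ ≫ ((ψ₁ ≫ φ) ≫ inv (ψ₁ ≫ φ)) := by simp only [Category.assoc]
      _ = φ := by rw [IsIso.hom_inv_id, Category.comp_id]
    refine ⟨φ ≫ inv (ψ₁ ≫ φ), ?_, ?_⟩
    · rw [← Category.assoc]
      exact IsIso.hom_inv_id (ψ₁ ≫ φ)
    · rw [key, Category.assoc]
      exact IsIso.inv_hom_id (φ ≫ ψ₁)
  -- conclusion
  have hN_LE : N⟦i-1⟧ ∈ w.LE :=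
    WS.mem_LE_of_iso w ((shiftFunctor C (i-1)).mapIso (asIso ψ₁).symm) hM
  refine ⟨N, c ≫ ψ₁, inv ψ₁ ≫ d, y, x, hN_GE, hN_LE, ?_, hTN⟩
  refine isomorphic_distinguished _ hTM _ ?_
  exact Triangle.isoMk _ _ (Iso.refl _) (Iso.refl _) (asIso ψ₁).symm (by exact (Category.comp_id s).trans (Category.id_comp s).symm)
    (by change (c ≫ ψ₁) ≫ inv ψ₁ = 𝟙 Pj ≫ c; simp)
    (by change (inv ψ₁ ≫ d) ≫ (𝟙 Pi)⟦(1:ℤ)⟧' = inv ψ₁ ≫ d; simp)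
end
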